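/- arXiv:1502.02204 — 2 statements merged into one kernel-verified Lean document; each statement's English description precedes it below -/
import Mathlib

section
/- Let (X,f) be a TDS and φ, ψ ∈ C(X,ℝ) with ψ > 0. Then P_ψ(φ) = lim_{ε→0} limsup_{T→∞} (1/T) log P_{ψ,T}(f,φ,ε), i.e., the induced pressure defined via spanning sets coincides with the one defined via separated sets. -/
open MeasureTheory Filter Topology Set

variable {X : Type*}

/-- Birkhoff sum `S_n φ (x) = ∑_{i<n} φ(f^i x)`. -/
noncomputable def birkhoff (f : X → X) (φ : X → ℝ) (n : ℕ) (x : X) : ℝ :=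
  ∑ i ∈ Finset.range n, φ (f^[i] x)

/-- The `n`-th Bowen metric. -/
noncomputable def dynDist [MetricSpace X] (f : X → X) (n : ℕ) (x y : X) : ℝ :=
  ⨆ i : Fin n, dist (f^[(i : ℕ)] x) (f^[(i : ℕ)] y)

/-- `F` is an `(n,ε)`-spanning set of `Z`. -/
def IsSpanningSet [MetricSpace X] (f : X → X) (n : ℕ) (ε : ℝ) (Z : Set X) (F : Finset X) : Prop :=
  ∀ y ∈ Z, ∃ x ∈ F, dynDist f n x y ≤ ε

/-- `E` is `(n,ε)`-separated. -/
def IsSeparatedSet [MetricSpace X] (f : X → X) (n : ℕ) (ε : ℝ) (E : Finset X) : Prop :=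
  ∀ x ∈ E, ∀ y ∈ E, x ≠ y → ε < dynDist f n x y

/-- `S_T = {n : ∃ x, S_n ψ(x) ≤ T < S_{n+1} ψ(x)}`. -/
def STset (f : X → X) (ψ : X → ℝ) (T : ℝ) : Set ℕ :=
  {n | ∃ x : X, birkhoff f ψ n x ≤ T ∧ T < birkhoff f ψ (n + 1) x}

/-- `X_n = {x : S_n ψ(x) ≤ T < S_{n+1} ψ(x)}`. -/
def Xset (f : X → X) (ψ : X → ℝ) (T : ℝ) (n : ℕ) : Set X :=
  {x | birkhoff f ψ n x ≤ T ∧ T < birkhoff f ψ (n + 1) x}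

/-- `Q_{ψ,T}(f,φ,ε)`, the spanning-set quantity. -/
noncomputable def Qspan [MetricSpace X] (f : X → X) (φ ψ : X → ℝ) (T ε : ℝ) : ℝ :=
  sInf { r : ℝ | ∃ F : ℕ → Finset X,
    (∀ n ∈ STset f ψ T, IsSpanningSet f n ε (Xset f ψ T n) (F n)) ∧
    r = ∑' n : ℕ, Set.indicator (STset f ψ T)
        (fun n => ∑ x ∈ F n, Real.exp (birkhoff f φ n x)) n }

/-- `P_{ψ,T}(f,φ,ε)`, the separated-set quantity. -/
noncomputable def Psep [MetricSpace X] (f : X → X) (φ ψ : X → ℝ) (T ε : ℝ) : ℝ :=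
  sSup { r : ℝ | ∃ E : ℕ → Finset X,
    (∀ n ∈ STset f ψ T, (E n : Set X) ⊆ Xset f ψ T n ∧ IsSeparatedSet f n ε (E n)) ∧
    r = ∑' n : ℕ, Set.indicator (STset f ψ T)
        (fun n => ∑ x ∈ E n, Real.exp (birkhoff f φ n x)) n }

/-- The `ψ`-induced topological pressure of `φ`. -/
noncomputable def inducedPressure [MetricSpace X] (f : X → X) (φ ψ : X → ℝ) : EReal :=
  ⨆ (ε : ℝ) (_ : 0 < ε),
    Filter.limsup (fun T : ℝ => ((T⁻¹ * Real.log (Qspan f φ ψ T ε) : ℝ) : EReal)) atTop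

/-- Largest sum over `(n,ε)`-separated sets of `X`. -/
noncomputable def sepSum [MetricSpace X] (f : X → X) (φ : X → ℝ) (n : ℕ) (ε : ℝ) : ℝ :=
  sSup { r : ℝ | ∃ E : Finset X, IsSeparatedSet f n ε E ∧
    r = ∑ x ∈ E, Real.exp (birkhoff f φ n x) }

/-- The classical (Walters) topological pressure. -/
noncomputable def topPressure [MetricSpace X] (f : X → X) (φ : X → ℝ) : EReal :=
  ⨆ (ε : ℝ) (_ : 0 < ε),
    Filter.limsup (fun n : ℕ => (((n : ℝ)⁻¹ * Real.log (sepSum f φ n ε) : ℝ) : EReal)) atTop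

/-!
Every point lies in some `X_n`, and `n ≤ T / c` on `S_T` when `c ≤ ψ`, so all the sums are finite
and positive. A maximal `(n, ε)`-separated subset of `X_n` is `(n, ε)`-spanning, whence `Q ≤ P` at
the same scale. Conversely, if `2δ ≤ ε`, sending each point of an `(n, ε)`-separated set to a point
of an `(n, δ)`-spanning set within Bowen distance `δ` is injective, and it changes `S_n φ` by at
most `n η ≤ T η / c`, where `η` is the oscillation of `φ` on `δ`-balls. Hence
`P_{ψ,T}(ε) ≤ exp (T η / c) Q_{ψ,T}(δ)`, and letting `η → 0` gives the reverse inequality.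
-/

open Real

theorem exists_le_and_lt_succ {α : Type*} [LinearOrder α] {s : ℕ → α} {t : α} (h0 : s 0 ≤ t)
    {m : ℕ} (hm : t < s m) : ∃ n, s n ≤ t ∧ t < s (n + 1) := by
  induction m with
  | zero => exact absurd h0 hm.not_ge
  | succ m ih =>
    by_cases h : s m ≤ t
    · exact ⟨m, h, hm⟩
    · exact ih (not_le.1 h)

theorem EReal.le_of_forall_pos_le_add {x y : EReal} (h : ∀ K : ℝ, 0 < K → x ≤ K + y) :
    x ≤ y := by
  refine EReal.le_of_forall_lt_iff_le.1 fun z hz => ?_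
  obtain ⟨w, hyw, hwz⟩ := EReal.lt_iff_exists_real_btwn.1 hz
  calc x ≤ ((z - w : ℝ) : EReal) + y := h _ (_root_.sub_pos.2 (EReal.coe_lt_coe_iff.1 hwz))
    _ ≤ ((z - w : ℝ) : EReal) + w := by gcongr
    _ = z := by rw [← EReal.coe_add, _root_.sub_add_cancel]

theorem EReal.limsup_const_add_le {ι : Type*} {l : Filter ι} [l.NeBot] (a : ℝ) (v : ι → EReal) :
    limsup (fun i => (a : EReal) + v i) l ≤ a + limsup v l := by
  have h := EReal.limsup_add_le (u := fun _ => (a : EReal)) (v := v) (f := l)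
    (Or.inl (by simp)) (Or.inl (by simp))
  rwa [limsup_const] at h

theorem UniformContinuous.exists_abs_sub_le {X : Type*} [PseudoMetricSpace X] {φ : X → ℝ}
    (hφ : UniformContinuous φ) {η ε : ℝ} (hη : 0 < η) (hε : 0 < ε) :
    ∃ δ > 0, 2 * δ ≤ ε ∧ ∀ u v, dist u v ≤ δ → |φ u - φ v| ≤ η := by
  obtain ⟨δ, hδ, hφδ⟩ := Metric.uniformContinuous_iff_le.1 hφ η hη
  refine ⟨min δ (ε / 2), lt_min hδ (half_pos hε), by linarith [min_le_right δ (ε / 2)],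
    fun u v huv => ?_⟩
  rw [← Real.dist_eq]
  exact hφδ (huv.trans (min_le_left _ _))

section Birkhoff

variable (f : X → X)

theorem mul_le_birkhoff {ψ : X → ℝ} {c : ℝ} (hψ : ∀ x, c ≤ ψ x) (n : ℕ) (x : X) :
    n * c ≤ birkhoff f ψ n x := by
  simpa [birkhoff] using Finset.card_nsmul_le_sum (Finset.range n) (fun i => ψ (f^[i] x)) c
    fun i _ => hψ _

variable {ψ : X → ℝ} {c T : ℝ}

theorem mul_le_of_mem_STset (hψ : ∀ x, c ≤ ψ x) {n : ℕ} (hn : n ∈ STset f ψ T) : n * c ≤ T := by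
  obtain ⟨x, hx, -⟩ := hn
  exact (mul_le_birkhoff f hψ n x).trans hx

theorem STset_finite (hc : 0 < c) (hψ : ∀ x, c ≤ ψ x) (T : ℝ) : (STset f ψ T).Finite :=
  (Set.finite_Iic ⌊T / c⌋₊).subset fun _ hn =>
    Nat.le_floor ((le_div_iff₀ hc).2 (mul_le_of_mem_STset f hψ hn))

theorem exists_mem_Xset (hc : 0 < c) (hψ : ∀ x, c ≤ ψ x) (hT : 0 ≤ T) (x : X) :
    ∃ n, x ∈ Xset f ψ T n := by
  obtain ⟨m, hm⟩ := exists_nat_gt (T / c)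
  have hTm : T < birkhoff f ψ m x :=
    calc T < m * c := (div_lt_iff₀ hc).1 hm
      _ ≤ _ := mul_le_birkhoff f hψ m x
  exact exists_le_and_lt_succ (s := fun n => birkhoff f ψ n x) (by simpa [birkhoff] using hT) hTm

end Birkhoff

section BowenMetric

variable [MetricSpace X] (f : X → X) (n : ℕ)

theorem dynDist_eq_dist (x y : X) :
    dynDist f n x y = dist (fun i : Fin n => f^[i] x) (fun i : Fin n => f^[i] y) := by
  refine le_antisymm (Real.iSup_le (fun i => dist_le_pi_dist (fun i : Fin n => f^[i] x)
    (fun i => f^[i] y) i) dist_nonneg) ?_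
  have h0 : 0 ≤ dynDist f n x y := Real.iSup_nonneg fun _ => dist_nonneg
  refine (dist_pi_le_iff h0).2 fun i => ?_
  exact le_ciSup (f := fun j : Fin n => dist (f^[j] x) (f^[j] y)) (Set.finite_range _).bddAbove i

theorem dynDist_self (x : X) : dynDist f n x x = 0 := by
  simp [dynDist_eq_dist]

theorem dynDist_comm (x y : X) : dynDist f n x y = dynDist f n y x := by
  simp only [dynDist_eq_dist, dist_comm]

theorem dynDist_triangle (x y z : X) : dynDist f n x z ≤ dynDist f n x y + dynDist f n y z := by
  simp only [dynDist_eq_dist]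
  exact dist_triangle _ _ _

theorem dist_iterate_le_dynDist {i : ℕ} (hi : i < n) (x y : X) :
    dist (f^[i] x) (f^[i] y) ≤ dynDist f n x y := by
  rw [dynDist_eq_dist]
  exact dist_le_pi_dist (fun i : Fin n => f^[i] x) (fun i => f^[i] y) ⟨i, hi⟩

theorem birkhoff_sub_le_of_dynDist_le {φ : X → ℝ} {δ η : ℝ}
    (hφ : ∀ u v, dist u v ≤ δ → |φ u - φ v| ≤ η) {x y : X} (h : dynDist f n x y ≤ δ) :
    birkhoff f φ n x - birkhoff f φ n y ≤ n * η := by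
  rw [birkhoff, birkhoff, ← Finset.sum_sub_distrib]
  refine (Finset.sum_le_card_nsmul _ _ η fun i hi => ?_).trans (by simp)
  exact (le_abs_self _).trans
    (hφ _ _ ((dist_iterate_le_dynDist f n (Finset.mem_range.1 hi) x y).trans h))

theorem exists_isSpanningSet_univ [CompactSpace X] (hf : Continuous f) {δ : ℝ} (hδ : 0 < δ) :
    ∃ F : Finset X, IsSpanningSet f n δ univ F := by
  have hu : UniformContinuous fun x (i : Fin n) => f^[i] x :=
    CompactSpace.uniformContinuous_of_continuous (continuous_pi fun i => hf.iterate i)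
  obtain ⟨δ', hδ', hclose⟩ := Metric.uniformContinuous_iff_le.1 hu δ hδ
  obtain ⟨F, hF⟩ := CompactSpace.elim_nhds_subcover (fun x : X => Metric.ball x δ')
    fun x => Metric.ball_mem_nhds x hδ'
  refine ⟨F, fun y _ => ?_⟩
  have hy : y ∈ ⋃ x ∈ F, Metric.ball x δ' := by rw [hF]; trivial
  obtain ⟨x, hx, hxy⟩ := Set.mem_iUnion₂.1 hy
  exact ⟨x, hx, (dynDist_eq_dist f n x y).trans_le (hclose (Metric.mem_ball'.1 hxy).le)⟩

end BowenMetric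

section SeparatedSpanning

variable [MetricSpace X] {f : X → X} {n : ℕ} {ε δ : ℝ} {Z : Set X} {E F : Finset X}

theorem IsSpanningSet.mono {Y : Set X} (h : IsSpanningSet f n δ Z F) (hYZ : Y ⊆ Z) :
    IsSpanningSet f n δ Y F :=
  fun y hy => h y (hYZ hy)

theorem IsSpanningSet.exists_approx (h : IsSpanningSet f n δ Z F) :
    ∃ g : X → X, ∀ y ∈ Z, g y ∈ F ∧ dynDist f n (g y) y ≤ δ := by
  classical
  exact ⟨fun y => if hy : y ∈ Z then (h y hy).choose else y, fun y hy => by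
    simpa only [dif_pos hy] using (h y hy).choose_spec⟩

theorem IsSeparatedSet.injOn_of_dynDist_le (hE : IsSeparatedSet f n ε E) (hδ : 2 * δ ≤ ε)
    {g : X → X} (hg : ∀ x ∈ E, dynDist f n (g x) x ≤ δ) : InjOn g E := by
  intro x hx y hy hxy
  by_contra hne
  have hfar := hE x hx y hy hne
  have hnear : dynDist f n x y ≤ 2 * δ :=
    calc dynDist f n x y ≤ dynDist f n x (g x) + dynDist f n (g x) y := dynDist_triangle f n _ _ _
      _ = dynDist f n (g x) x + dynDist f n (g y) y := by rw [dynDist_comm f n x, hxy]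
      _ ≤ 2 * δ := by linarith [hg x hx, hg y hy]
  linarith

theorem IsSeparatedSet.card_le (hE : IsSeparatedSet f n ε E) (hEZ : (E : Set X) ⊆ Z)
    (hF : IsSpanningSet f n δ Z F) (hδ : 2 * δ ≤ ε) : E.card ≤ F.card := by
  obtain ⟨g, hg⟩ := hF.exists_approx
  exact Finset.card_le_card_of_injOn g (fun x hx => (hg x (hEZ hx)).1)
    (hE.injOn_of_dynDist_le hδ fun x hx => (hg x (hEZ hx)).2)

theorem IsSeparatedSet.sum_exp_birkhoff_le {φ : X → ℝ} {η : ℝ} (hE : IsSeparatedSet f n ε E)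
    (hEZ : (E : Set X) ⊆ Z) (hF : IsSpanningSet f n δ Z F) (hδ : 2 * δ ≤ ε)
    (hφ : ∀ u v, dist u v ≤ δ → |φ u - φ v| ≤ η) :
    ∑ x ∈ E, exp (birkhoff f φ n x) ≤ exp (n * η) * ∑ y ∈ F, exp (birkhoff f φ n y) := by
  classical
  obtain ⟨g, hg⟩ := hF.exists_approx
  have hinj := hE.injOn_of_dynDist_le hδ fun x hx => (hg x (hEZ hx)).2
  calc ∑ x ∈ E, exp (birkhoff f φ n x)
      ≤ ∑ x ∈ E, exp (n * η) * exp (birkhoff f φ n (g x)) := by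
        refine Finset.sum_le_sum fun x hx => ?_
        rw [← Real.exp_add, Real.exp_le_exp]
        have hx' : dynDist f n x (g x) ≤ δ := dynDist_comm f n x (g x) ▸ (hg x (hEZ hx)).2
        linarith [birkhoff_sub_le_of_dynDist_le f n hφ hx']
    _ = exp (n * η) * ∑ y ∈ E.image g, exp (birkhoff f φ n y) := by
        rw [Finset.mul_sum, Finset.sum_image hinj]
    _ ≤ exp (n * η) * ∑ y ∈ F, exp (birkhoff f φ n y) := by
        gcongr
        exact Finset.image_subset_iff.2 fun x hx => (hg x (hEZ hx)).1

theorem IsSeparatedSet.insert [DecidableEq X] (hE : IsSeparatedSet f n ε E) {y : X}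
    (hy : ∀ x ∈ E, ε < dynDist f n x y) : IsSeparatedSet f n ε (insert y E) := by
  intro a ha b hb hab
  rw [Finset.mem_insert] at ha hb
  rcases ha with rfl | ha <;> rcases hb with rfl | hb
  · exact absurd rfl hab
  · exact dynDist_comm f n a b ▸ hy b hb
  · exact hy a ha
  · exact hE a ha b hb hab

theorem exists_isSeparatedSet_isSpanningSet [CompactSpace X] (hf : Continuous f) (hε : 0 < ε)
    (Z : Set X) : ∃ E : Finset X, (E : Set X) ⊆ Z ∧ IsSeparatedSet f n ε E ∧
      IsSpanningSet f n ε Z E := by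
  classical
  obtain ⟨G, hG⟩ := exists_isSpanningSet_univ f n hf (half_pos hε)
  let C := {k : ℕ | ∃ E : Finset X, (E : Set X) ⊆ Z ∧ IsSeparatedSet f n ε E ∧ E.card = k}
  have hC : BddAbove C := ⟨G.card, by
    rintro _ ⟨E, -, hE, rfl⟩
    exact hE.card_le (subset_univ _) hG (by linarith)⟩
  have hC0 : 0 ∈ C := ⟨∅, by simp, fun x hx => absurd hx (Finset.notMem_empty x), rfl⟩
  obtain ⟨E, hEZ, hE, hcard⟩ := Nat.sSup_mem ⟨0, hC0⟩ hC
  refine ⟨E, hEZ, hE, fun y hy => ?_⟩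
  by_contra! hfar
  have hyE : y ∉ E := fun hyE => (hfar y hyE).not_ge (by rw [dynDist_self]; exact hε.le)
  have hmax := le_csSup hC ⟨insert y E, by simpa [Set.insert_subset_iff] using ⟨hy, hEZ⟩,
    hE.insert hfar, rfl⟩
  rw [Finset.card_insert_of_notMem hyE, hcard] at hmax
  omega

end SeparatedSpanning

/-- `Qspan` and `Psep` unfold to the infimum and supremum of this sum over admissible families. -/
noncomputable def inducedSum (f : X → X) (φ ψ : X → ℝ) (T : ℝ) (F : ℕ → Finset X) : ℝ :=
  ∑' n : ℕ, Set.indicator (STset f ψ T) (fun n => ∑ x ∈ F n, exp (birkhoff f φ n x)) n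

section InducedSum

variable {f : X → X} {φ ψ : X → ℝ} {T : ℝ}

theorem inducedSum_eq_sum (hfin : (STset f ψ T).Finite) (F : ℕ → Finset X) :
    inducedSum f φ ψ T F = ∑ n ∈ hfin.toFinset, ∑ x ∈ F n, exp (birkhoff f φ n x) := by
  rw [sum_eq_tsum_indicator, hfin.coe_toFinset]
  rfl

theorem inducedSum_nonneg (F : ℕ → Finset X) : 0 ≤ inducedSum f φ ψ T F :=
  tsum_nonneg fun n =>
    Set.indicator_nonneg (fun _ _ => Finset.sum_nonneg fun _ _ => (exp_pos _).le) n

theorem inducedSum_le_mul (hfin : (STset f ψ T).Finite) {E F : ℕ → Finset X} {C : ℝ}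
    (h : ∀ n ∈ STset f ψ T,
      ∑ x ∈ E n, exp (birkhoff f φ n x) ≤ C * ∑ x ∈ F n, exp (birkhoff f φ n x)) :
    inducedSum f φ ψ T E ≤ C * inducedSum f φ ψ T F := by
  rw [inducedSum_eq_sum hfin, inducedSum_eq_sum hfin, Finset.mul_sum]
  exact Finset.sum_le_sum fun n hn => h n (hfin.mem_toFinset.1 hn)

theorem exp_birkhoff_le_inducedSum (hfin : (STset f ψ T).Finite) {F : ℕ → Finset X} {n : ℕ}
    (hn : n ∈ STset f ψ T) {x : X} (hx : x ∈ F n) :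
    exp (birkhoff f φ n x) ≤ inducedSum f φ ψ T F := by
  rw [inducedSum_eq_sum hfin]
  refine (Finset.single_le_sum (fun _ _ => (exp_pos _).le) hx).trans ?_
  exact Finset.single_le_sum (f := fun m => ∑ x ∈ F m, exp (birkhoff f φ m x))
    (fun _ _ => Finset.sum_nonneg fun _ _ => (exp_pos _).le) (hfin.mem_toFinset.2 hn)

end InducedSum

section Pressure

variable [MetricSpace X] {f : X → X} {φ ψ : X → ℝ} {c T ε δ η : ℝ}

theorem Qspan_le {F : ℕ → Finset X}
    (hF : ∀ n ∈ STset f ψ T, IsSpanningSet f n ε (Xset f ψ T n) (F n)) :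
    Qspan f φ ψ T ε ≤ inducedSum f φ ψ T F :=
  csInf_le ⟨0, by rintro _ ⟨F, -, rfl⟩; exact inducedSum_nonneg F⟩ ⟨F, hF, rfl⟩

theorem le_Psep {B : ℝ}
    (hB : ∀ E : ℕ → Finset X,
      (∀ n ∈ STset f ψ T, (E n : Set X) ⊆ Xset f ψ T n ∧ IsSeparatedSet f n ε (E n)) →
        inducedSum f φ ψ T E ≤ B)
    {E : ℕ → Finset X}
    (hE : ∀ n ∈ STset f ψ T, (E n : Set X) ⊆ Xset f ψ T n ∧ IsSeparatedSet f n ε (E n)) :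
    inducedSum f φ ψ T E ≤ Psep f φ ψ T ε :=
  le_csSup ⟨B, by rintro _ ⟨E, hE, rfl⟩; exact hB E hE⟩ ⟨E, hE, rfl⟩

theorem Psep_le {B : ℝ}
    (hB : ∀ E : ℕ → Finset X,
      (∀ n ∈ STset f ψ T, (E n : Set X) ⊆ Xset f ψ T n ∧ IsSeparatedSet f n ε (E n)) →
        inducedSum f φ ψ T E ≤ B) :
    Psep f φ ψ T ε ≤ B := by
  refine csSup_le ⟨_, fun _ => ∅, fun n _ => ⟨by simp, fun x hx => absurd hx
    (Finset.notMem_empty x)⟩, rfl⟩ ?_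
  rintro _ ⟨E, hE, rfl⟩
  exact hB E hE

variable [CompactSpace X]

theorem le_Qspan (hf : Continuous f) (hε : 0 < ε) {a : ℝ}
    (h : ∀ F : ℕ → Finset X, (∀ n ∈ STset f ψ T, IsSpanningSet f n ε (Xset f ψ T n) (F n)) →
      a ≤ inducedSum f φ ψ T F) :
    a ≤ Qspan f φ ψ T ε := by
  choose F hF using fun n => exists_isSpanningSet_univ f n hf hε
  refine le_csInf ⟨_, F, fun n _ => (hF n).mono (subset_univ _), rfl⟩ ?_
  rintro _ ⟨F, hF, rfl⟩
  exact h F hF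

theorem Qspan_pos [Nonempty X] (hf : Continuous f) (hc : 0 < c) (hψ : ∀ x, c ≤ ψ x) {m : ℝ}
    (hφ : ∀ x, m ≤ φ x) (hT : 0 ≤ T) (hε : 0 < ε) : 0 < Qspan f φ ψ T ε := by
  obtain ⟨x⟩ := ‹Nonempty X›
  obtain ⟨n, hx⟩ := exists_mem_Xset f hc hψ hT x
  refine (exp_pos (n * m)).trans_le (le_Qspan hf hε fun F hF => ?_)
  obtain ⟨y, hy, -⟩ := hF n ⟨x, hx⟩ x hx
  exact (exp_le_exp.2 (mul_le_birkhoff f hφ n y)).trans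
    (exp_birkhoff_le_inducedSum (STset_finite f hc hψ T) ⟨x, hx⟩ hy)

theorem inducedSum_le_exp_mul_Qspan (hf : Continuous f) (hc : 0 < c) (hψ : ∀ x, c ≤ ψ x)
    (hδ : 0 < δ) (hδε : 2 * δ ≤ ε) (hη : 0 ≤ η) (hφ : ∀ u v, dist u v ≤ δ → |φ u - φ v| ≤ η)
    {E : ℕ → Finset X}
    (hE : ∀ n ∈ STset f ψ T, (E n : Set X) ⊆ Xset f ψ T n ∧ IsSeparatedSet f n ε (E n)) :
    inducedSum f φ ψ T E ≤ exp (T / c * η) * Qspan f φ ψ T δ := by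
  rw [← div_le_iff₀' (exp_pos _)]
  refine le_Qspan hf hδ fun F hF => ?_
  rw [div_le_iff₀' (exp_pos _)]
  refine inducedSum_le_mul (STset_finite f hc hψ T) fun n hn => ?_
  obtain ⟨hEX, hEsep⟩ := hE n hn
  refine (hEsep.sum_exp_birkhoff_le hEX (hF n hn) hδε hφ).trans ?_
  gcongr
  exact (le_div_iff₀ hc).2 (mul_le_of_mem_STset f hψ hn)

theorem Psep_le_exp_mul_Qspan (hf : Continuous f) (hc : 0 < c) (hψ : ∀ x, c ≤ ψ x)
    (hδ : 0 < δ) (hδε : 2 * δ ≤ ε) (hη : 0 ≤ η) (hφ : ∀ u v, dist u v ≤ δ → |φ u - φ v| ≤ η) :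
    Psep f φ ψ T ε ≤ exp (T / c * η) * Qspan f φ ψ T δ :=
  Psep_le fun _ hE => inducedSum_le_exp_mul_Qspan hf hc hψ hδ hδε hη hφ hE

theorem Qspan_le_Psep (hf : Continuous f) (hc : 0 < c) (hψ : ∀ x, c ≤ ψ x)
    (hφ : UniformContinuous φ) (hε : 0 < ε) : Qspan f φ ψ T ε ≤ Psep f φ ψ T ε := by
  choose E hEX hEsep hEspan using fun n =>
    exists_isSeparatedSet_isSpanningSet (n := n) hf hε (Xset f ψ T n)
  obtain ⟨δ, hδ, hδε, hφδ⟩ := hφ.exists_abs_sub_le one_pos hε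
  exact (Qspan_le fun n _ => hEspan n).trans (le_Psep
    (fun _ hE' => inducedSum_le_exp_mul_Qspan hf hc hψ hδ hδε zero_le_one hφδ hE')
    fun n _ => ⟨hEX n, hEsep n⟩)

end Pressure

section Limsup

variable [MetricSpace X] [CompactSpace X] [Nonempty X] {f : X → X} {φ ψ : X → ℝ} {c m ε : ℝ}

theorem limsup_log_Qspan_le_limsup_log_Psep (hf : Continuous f) (hc : 0 < c)
    (hψ : ∀ x, c ≤ ψ x) (hφm : ∀ x, m ≤ φ x) (hφ : UniformContinuous φ) (hε : 0 < ε) :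
    limsup (fun T : ℝ => ((T⁻¹ * log (Qspan f φ ψ T ε) : ℝ) : EReal)) atTop ≤
      limsup (fun T : ℝ => ((T⁻¹ * log (Psep f φ ψ T ε) : ℝ) : EReal)) atTop := by
  refine limsup_le_limsup ?_
  filter_upwards [eventually_ge_atTop 0] with T hT
  exact EReal.coe_le_coe_iff.2 (mul_le_mul_of_nonneg_left (log_le_log
    (Qspan_pos hf hc hψ hφm hT hε) (Qspan_le_Psep hf hc hψ hφ hε)) (inv_nonneg.2 hT))

theorem limsup_log_Psep_le (hf : Continuous f) (hc : 0 < c) (hψ : ∀ x, c ≤ ψ x)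
    (hφm : ∀ x, m ≤ φ x) (hφ : UniformContinuous φ) (hε : 0 < ε) {δ η : ℝ} (hδ : 0 < δ)
    (hδε : 2 * δ ≤ ε) (hη : 0 ≤ η) (hφδ : ∀ u v, dist u v ≤ δ → |φ u - φ v| ≤ η) :
    limsup (fun T : ℝ => ((T⁻¹ * log (Psep f φ ψ T ε) : ℝ) : EReal)) atTop ≤
      ((η / c : ℝ) : EReal) +
        limsup (fun T : ℝ => ((T⁻¹ * log (Qspan f φ ψ T δ) : ℝ) : EReal)) atTop := by
  refine (limsup_le_limsup ?_).trans (EReal.limsup_const_add_le _ _)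
  filter_upwards [eventually_gt_atTop 0] with T hT
  rw [← EReal.coe_add, EReal.coe_le_coe_iff]
  have hQδ := Qspan_pos hf hc hψ hφm hT.le hδ
  have hPε := (Qspan_pos hf hc hψ hφm hT.le hε).trans_le (Qspan_le_Psep hf hc hψ hφ hε)
  calc T⁻¹ * log (Psep f φ ψ T ε)
      ≤ T⁻¹ * log (exp (T / c * η) * Qspan f φ ψ T δ) :=
        mul_le_mul_of_nonneg_left (log_le_log hPε (Psep_le_exp_mul_Qspan hf hc hψ hδ hδε hη hφδ))
          (inv_nonneg.2 hT.le)
    _ = η / c + T⁻¹ * log (Qspan f φ ψ T δ) := by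
        rw [log_mul (exp_pos _).ne' hQδ.ne', log_exp]
        field_simp

end Limsup

/-- the induced pressure can be computed via separated sets. -/
theorem stmt4 [MetricSpace X] [CompactSpace X] [Nonempty X]
    (f : X → X) (φ ψ : X → ℝ) (hf : Continuous f) (hφ : Continuous φ) (hψ : Continuous ψ)
    (hpos : ∀ x, 0 < ψ x) :
    inducedPressure f φ ψ =
      ⨆ (ε : ℝ) (_ : 0 < ε),
        Filter.limsup (fun T : ℝ => ((T⁻¹ * Real.log (Psep f φ ψ T ε) : ℝ) : EReal)) atTop := by
  obtain ⟨xψ, -, hxψ⟩ := isCompact_univ.exists_isMinOn univ_nonempty hψ.continuousOn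
  obtain ⟨xφ, -, hxφ⟩ := isCompact_univ.exists_isMinOn univ_nonempty hφ.continuousOn
  have hψc : ∀ x, ψ xψ ≤ ψ x := fun x => hxψ (mem_univ x)
  have hφm : ∀ x, φ xφ ≤ φ x := fun x => hxφ (mem_univ x)
  have hc := hpos xψ
  have hφu := CompactSpace.uniformContinuous_of_continuous hφ
  refine le_antisymm (iSup₂_mono fun ε hε =>
    limsup_log_Qspan_le_limsup_log_Psep hf hc hψc hφm hφu hε) ?_
  refine iSup₂_le fun ε hε => EReal.le_of_forall_pos_le_add fun K hK => ?_
  obtain ⟨δ, hδ, hδε, hφδ⟩ := hφu.exists_abs_sub_le (mul_pos hc hK) hε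
  calc _ ≤ ((ψ xψ * K / ψ xψ : ℝ) : EReal) +
        limsup (fun T : ℝ => ((T⁻¹ * log (Qspan f φ ψ T δ) : ℝ) : EReal)) atTop :=
        limsup_log_Psep_le hf hc hψc hφm hφu hε hδ hδε (mul_pos hc hK).le hφδ
    _ ≤ K + inducedPressure f φ ψ := by
        rw [mul_div_cancel_left₀ _ hc.ne']
        gcongr
        exact le_iSup₂_of_le (f := fun δ (_ : 0 < δ) => limsup (fun T : ℝ =>
          ((T⁻¹ * log (Qspan f φ ψ T δ) : ℝ) : EReal)) atTop) δ hδ le_rfl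
end

section
/- Let (X,f) be a TDS, ψ ∈ C(X,ℝ) with ψ > 0. If P(φ − βψ) < 0 (classical pressure), then for every ε > 0, limsup_{T→∞} R_{ψ,T}(f, φ − βψ, ε) < ∞, where R_{ψ,T} is the supremum over (n,ε)-separated sets of Y_n = {x : S_nψ(x) > T} (n ∈ G_T) of the sum of exp(S_n(φ − βψ)). -/
open MeasureTheory Filter Topology Set

variable {X : Type*}

/-- `G_T = {n : ∃ x, S_n ψ(x) > T}`. -/
def GTset (f : X → X) (ψ : X → ℝ) (T : ℝ) : Set ℕ :=
  {n | ∃ x : X, T < birkhoff f ψ n x}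

/-- `Y_n = {x : S_n ψ(x) > T}`. -/
def Yset (f : X → X) (ψ : X → ℝ) (T : ℝ) (n : ℕ) : Set X :=
  {x | T < birkhoff f ψ n x}

/-- `R_{ψ,T}(f,φ,ε)`: supremum over `(n,ε)`-separated subsets of `Y_n`, `n ∈ G_T`. -/
noncomputable def Rsep [MetricSpace X] (f : X → X) (φ ψ : X → ℝ) (T ε : ℝ) : ENNReal :=
  ⨆ (E : ℕ → Finset X)
    (_ : ∀ n ∈ GTset f ψ T, (E n : Set X) ⊆ Yset f ψ T n ∧ IsSeparatedSet f n ε (E n)),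
    ∑' n : ℕ, Set.indicator (GTset f ψ T)
      (fun n => ENNReal.ofReal (∑ x ∈ E n, Real.exp (birkhoff f φ n x))) n

/-! Every admissible family in `R_{ψ,T}` consists, level by level, of `(n,ε)`-separated sets,
so `R_{ψ,T} ≤ ∑ₙ sepSum n` uniformly in `T`. Negative pressure makes `sepSum n` decay
geometrically, and on a compact space each `sepSum n` is finite, so the series converges. -/

theorem birkhoff_le_of_le (f : X → X) {φ : X → ℝ} {M : ℝ} (hM : ∀ x, φ x ≤ M) (n : ℕ)
    (x : X) : birkhoff f φ n x ≤ n * M := by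
  simpa [birkhoff] using Finset.sum_le_sum fun i (_ : i ∈ Finset.range n) => hM (f^[i] x)

section

variable [MetricSpace X]

theorem dynDist_le_dist_orbit (f : X → X) (n : ℕ) (x y : X) :
    dynDist f n x y ≤ dist (fun i : Fin n => f^[i] x) (fun i : Fin n => f^[i] y) :=
  Real.iSup_le (fun i => dist_le_pi_dist (fun i : Fin n => f^[i] x) (fun i : Fin n => f^[i] y) i)
    dist_nonneg

/-- Points of a separated set have distinct centres in an `ε / 2`-net of the orbit space
`Fin n → X`, which is compact. -/
theorem IsSeparatedSet.exists_card_le [CompactSpace X] (f : X → X) (n : ℕ) {ε : ℝ}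
    (hε : 0 < ε) : ∃ N : ℕ, ∀ E : Finset X, IsSeparatedSet f n ε E → E.card ≤ N := by
  let orbit : X → (Fin n → X) := fun x i => f^[i] x
  obtain ⟨t, ht, hcover⟩ := Metric.totallyBounded_iff.mp
    (isCompact_univ (X := Fin n → X)).totallyBounded (ε / 2) (half_pos hε)
  have hcentre : ∀ x, ∃ c ∈ t, dist (orbit x) c < ε / 2 := fun x => by
    simpa using hcover (mem_univ (orbit x))
  choose centre hcentre_mem hcentre_dist using hcentre
  refine ⟨ht.toFinset.card, fun E hE => Finset.card_le_card_of_injOn centre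
    (fun x _ => by simpa using hcentre_mem x) fun x hx y hy hxy => ?_⟩
  by_contra hne
  have hclose : dist (orbit x) (orbit y) < ε := by
    calc dist (orbit x) (orbit y) ≤ dist (orbit x) (centre x) + dist (orbit y) (centre y) := by
          rw [hxy]; exact dist_triangle_right _ _ _
      _ < ε / 2 + ε / 2 := add_lt_add (hcentre_dist x) (hcentre_dist y)
      _ = ε := add_halves ε
  exact (hE x hx y hy hne).not_ge ((dynDist_le_dist_orbit f n x y).trans hclose.le)

theorem bddAbove_sepSum_set [CompactSpace X] (f : X → X) {φ : X → ℝ} (hφ : Continuous φ)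
    (n : ℕ) {ε : ℝ} (hε : 0 < ε) :
    BddAbove {r : ℝ | ∃ E : Finset X, IsSeparatedSet f n ε E ∧
      r = ∑ x ∈ E, Real.exp (birkhoff f φ n x)} := by
  obtain ⟨N, hN⟩ := IsSeparatedSet.exists_card_le f n hε
  obtain ⟨M, hM⟩ := (isCompact_range hφ).bddAbove
  refine ⟨N * Real.exp (n * M), ?_⟩
  rintro r ⟨E, hE, rfl⟩
  calc ∑ x ∈ E, Real.exp (birkhoff f φ n x) ≤ ∑ _x ∈ E, Real.exp (n * M) :=
        Finset.sum_le_sum fun x _ =>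
          Real.exp_le_exp.mpr (birkhoff_le_of_le f (fun y => hM (mem_range_self y)) n x)
    _ = E.card * Real.exp (n * M) := by rw [Finset.sum_const, nsmul_eq_mul]
    _ ≤ N * Real.exp (n * M) := by gcongr; exact hN E hE

theorem le_sepSum [CompactSpace X] (f : X → X) {φ : X → ℝ} (hφ : Continuous φ) (n : ℕ)
    {ε : ℝ} (hε : 0 < ε) {E : Finset X} (hE : IsSeparatedSet f n ε E) :
    ∑ x ∈ E, Real.exp (birkhoff f φ n x) ≤ sepSum f φ n ε :=
  le_csSup (bddAbove_sepSum_set f hφ n hε) ⟨E, hE, rfl⟩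

theorem sepSum_nonneg [CompactSpace X] (f : X → X) {φ : X → ℝ} (hφ : Continuous φ) (n : ℕ)
    {ε : ℝ} (hε : 0 < ε) : 0 ≤ sepSum f φ n ε := by
  simpa using le_sepSum f hφ n hε (E := ∅) (by simp [IsSeparatedSet])

theorem exists_eventually_sepSum_le_pow (f : X → X) {φ : X → ℝ}
    (hP : topPressure f φ < 0) {ε : ℝ} (hε : 0 < ε) :
    ∃ r, 0 ≤ r ∧ r < 1 ∧ ∀ᶠ n : ℕ in atTop, sepSum f φ n ε ≤ r ^ n := by
  have hlimsup : limsup (fun n : ℕ => (((n : ℝ)⁻¹ * Real.log (sepSum f φ n ε) : ℝ) : EReal))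
      atTop < 0 :=
    lt_of_le_of_lt (le_iSup₂_of_le ε hε le_rfl) hP
  obtain ⟨c, hc, hc_neg⟩ := EReal.exists_between_coe_real hlimsup
  refine ⟨Real.exp c, (Real.exp_pos c).le, Real.exp_lt_one_iff.mpr (by exact_mod_cast hc_neg), ?_⟩
  filter_upwards [eventually_lt_of_limsup_lt hc, eventually_gt_atTop 0] with n hn hn_pos
  have hlog : Real.log (sepSum f φ n ε) < n * c := by
    rw [← inv_mul_lt_iff₀ (by exact_mod_cast hn_pos)]
    exact_mod_cast hn
  rw [← Real.exp_nat_mul]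
  rcases le_or_gt (sepSum f φ n ε) 0 with hs | hs
  · exact hs.trans (Real.exp_pos _).le
  · exact ((Real.log_lt_iff_lt_exp hs).mp hlog).le

theorem summable_sepSum [CompactSpace X] (f : X → X) {φ : X → ℝ} (hφ : Continuous φ)
    (hP : topPressure f φ < 0) {ε : ℝ} (hε : 0 < ε) :
    Summable fun n => sepSum f φ n ε := by
  obtain ⟨r, hr_nonneg, hr, hbound⟩ := exists_eventually_sepSum_le_pow f hP hε
  refine Summable.of_norm_bounded_eventually_nat (summable_geometric_of_lt_one hr_nonneg hr) ?_
  filter_upwards [hbound] with n hn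
  rwa [Real.norm_of_nonneg (sepSum_nonneg f hφ n hε)]

theorem Rsep_le_tsum_sepSum [CompactSpace X] (f : X → X) {φ : X → ℝ} (hφ : Continuous φ)
    (ψ : X → ℝ) (T : ℝ) {ε : ℝ} (hε : 0 < ε) :
    Rsep f φ ψ T ε ≤ ∑' n, ENNReal.ofReal (sepSum f φ n ε) := by
  refine iSup₂_le fun E hE => ENNReal.tsum_le_tsum fun n => ?_
  by_cases hn : n ∈ GTset f ψ T
  · rw [indicator_of_mem hn]
    exact ENNReal.ofReal_le_ofReal (le_sepSum f hφ n hε (hE n hn).2)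
  · rw [indicator_of_notMem hn]
    exact zero_le

end

theorem stmt12_general [MetricSpace X] [CompactSpace X]
    (f : X → X) (φ ψ : X → ℝ) (hφ : Continuous φ) (hψ : Continuous ψ)
    (β : ℝ)
    (hP : topPressure f (fun x => φ x - β * ψ x) < 0) :
    ∀ ε : ℝ, 0 < ε →
      Filter.limsup (fun T : ℝ => Rsep f (fun x => φ x - β * ψ x) ψ T ε) atTop < ⊤ := by
  intro ε hε
  have hg : Continuous fun x => φ x - β * ψ x := hφ.sub (continuous_const.mul hψ)
  calc limsup (fun T : ℝ => Rsep f (fun x => φ x - β * ψ x) ψ T ε) atTop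
      ≤ ∑' n, ENNReal.ofReal (sepSum f (fun x => φ x - β * ψ x) n ε) :=
        limsup_le_of_le (by isBoundedDefault)
          (Eventually.of_forall fun T => Rsep_le_tsum_sepSum f hg ψ T hε)
    _ = ENNReal.ofReal (∑' n, sepSum f (fun x => φ x - β * ψ x) n ε) :=
        (ENNReal.ofReal_tsum_of_nonneg (fun n => sepSum_nonneg f hg n hε)
          (summable_sepSum f hg hP hε)).symm
    _ < ⊤ := ENNReal.ofReal_lt_top

/-- if `P(φ - βψ) < 0` then `limsup_T R_{ψ,T}(f, φ-βψ, ε) < ∞` for every `ε > 0`. -/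
theorem stmt12 [MetricSpace X] [CompactSpace X] [Nonempty X]
    (f : X → X) (φ ψ : X → ℝ) (hf : Continuous f) (hφ : Continuous φ) (hψ : Continuous ψ)
    (hpos : ∀ x, 0 < ψ x) (β : ℝ)
    (hP : topPressure f (fun x => φ x - β * ψ x) < 0) :
    ∀ ε : ℝ, 0 < ε →
      Filter.limsup (fun T : ℝ => Rsep f (fun x => φ x - β * ψ x) ψ T ε) atTop < ⊤ :=
  stmt12_general f φ ψ hφ hψ β hP
end
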